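/- arXiv:1104.2970 — 6 statements merged into one kernel-verified Lean document; each statement's English description precedes it below -/
import Mathlib

section
/- Canonical min-max duality (Gao–Strang): if σ̄ is a critical point of Π^d with G(σ̄) positive semi-definite and x̄ = G(σ̄)⁻¹F(σ̄) (i.e., G(σ̄)x̄ = F(σ̄)), then x̄ is a global minimizer of Π(x) = V(Λ(x)) + ½⟨x,Ax⟩ - ⟨x,f⟩ over all of ℝ^n. -/
/-!
Write `σ̄ = ∇V(Λ x̄)`. Convexity of `V` gives `V(Λ x) ≥ V(Λ x̄) + ⟨σ̄, Λ x - Λ x̄⟩`, and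
`⟨σ̄, Λ x⟩ + ½⟨x, A x⟩ - ⟨x, f⟩ = ½⟨x, G(σ̄) x⟩ - ⟨x, F(σ̄)⟩`. Hence
`Π(x) - Π(x̄)` is bounded below by the increment of the quadratic `½⟨x, G(σ̄) x⟩ - ⟨x, F(σ̄)⟩`,
which equals `½⟨x - x̄, G(σ̄)(x - x̄)⟩ ≥ 0` because `G(σ̄) x̄ = F(σ̄)`.
-/

open Matrix

theorem ConvexOn.add_apply_sub_le_of_hasFDerivAt {E : Type*} [NormedAddCommGroup E]
    [NormedSpace ℝ E] {s : Set E} {f : E → ℝ} {f' : E →L[ℝ] ℝ} {x y : E}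
    (hf : ConvexOn ℝ s f) (hx : x ∈ s) (hy : y ∈ s) (hf' : HasFDerivAt f f' x) :
    f x + f' (y - x) ≤ f y := by
  have hline : ConvexOn ℝ (Set.Icc (0 : ℝ) 1) (f ∘ (AffineMap.lineMap x y : ℝ →ᵃ[ℝ] E)) := by
    refine (hf.comp_affineMap (AffineMap.lineMap x y)).subset ?_ (convex_Icc 0 1)
    rw [← Set.image_subset_iff, ← segment_eq_image_lineMap]
    exact hf.1.segment_subset hx hy
  have hderiv : HasDerivAt (f ∘ (AffineMap.lineMap x y : ℝ →ᵃ[ℝ] E)) (f' (y - x)) 0 := by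
    refine HasFDerivAt.comp_hasDerivAt (0 : ℝ) ?_ AffineMap.hasDerivAt_lineMap
    simpa using hf'
  have hslope := hline.le_slope_of_hasDerivAt (by simp) (by simp) zero_lt_one hderiv
  simp only [slope_def_field, Function.comp_apply, AffineMap.lineMap_apply_zero,
    AffineMap.lineMap_apply_one, sub_zero, div_one] at hslope
  linarith

theorem LinearMap.apply_eq_dotProduct_apply_single {R m : Type*} [CommSemiring R] [Fintype m]
    [DecidableEq m] (L : (m → R) →ₗ[R] R) (v : m → R) :
    L v = (fun k => L (Pi.single k 1)) ⬝ᵥ v := by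
  conv_lhs => rw [pi_eq_sum_univ' v]
  simp only [map_sum, map_smul, smul_eq_mul, dotProduct, mul_comm]

section QuadraticEnergy

variable {ι : Type*} [Fintype ι]

noncomputable def quadraticEnergy (M : Matrix ι ι ℝ) (F x : ι → ℝ) : ℝ :=
  1 / 2 * (x ⬝ᵥ M *ᵥ x) - x ⬝ᵥ F

theorem quadraticEnergy_sub_quadraticEnergy {M : Matrix ι ι ℝ} {F x₀ : ι → ℝ} (hM : M.IsSymm)
    (hx₀ : M *ᵥ x₀ = F) (x : ι → ℝ) :
    quadraticEnergy M F x - quadraticEnergy M F x₀ = 1 / 2 * ((x - x₀) ⬝ᵥ M *ᵥ (x - x₀)) := by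
  have hsymm : x₀ ⬝ᵥ M *ᵥ x = x ⬝ᵥ M *ᵥ x₀ := by
    rw [dotProduct_mulVec, ← mulVec_transpose, hM.eq, dotProduct_comm]
  simp only [quadraticEnergy, ← hx₀, mulVec_sub, dotProduct_sub, sub_dotProduct, hsymm]
  ring

theorem quadraticEnergy_le_of_posSemidef {M : Matrix ι ι ℝ} {F x₀ : ι → ℝ} (hM : M.PosSemidef)
    (hx₀ : M *ᵥ x₀ = F) (x : ι → ℝ) :
    quadraticEnergy M F x₀ ≤ quadraticEnergy M F x := by
  have hsymm : M.IsSymm := by simpa using hM.isHermitian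
  have hpos : 0 ≤ (x - x₀) ⬝ᵥ M *ᵥ (x - x₀) := by
    simpa using hM.dotProduct_mulVec_nonneg (x - x₀)
  linarith [quadraticEnergy_sub_quadraticEnergy hsymm hx₀ x]

theorem quadraticEnergy_add_sum_smul {κ : Type*} [Fintype κ] (A : Matrix ι ι ℝ)
    (B : κ → Matrix ι ι ℝ) (f : ι → ℝ) (b : κ → ι → ℝ) (σ : κ → ℝ) (x : ι → ℝ) :
    quadraticEnergy (A + ∑ k, σ k • B k) (f - ∑ k, σ k • b k) x =
      quadraticEnergy A f x + σ ⬝ᵥ fun k => 1 / 2 * (x ⬝ᵥ B k *ᵥ x) + b k ⬝ᵥ x := by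
  simp only [quadraticEnergy, add_mulVec, sum_mulVec, dotProduct_add, dotProduct_sub,
    dotProduct_sum, smul_mulVec, dotProduct_smul, smul_eq_mul, dotProduct_comm x (b _)]
  rw [show (σ ⬝ᵥ fun k => _) = ∑ k, σ k * _ from rfl]
  simp only [mul_add, Finset.sum_add_distrib, Finset.mul_sum, mul_left_comm (σ _)]
  ring

end QuadraticEnergy

theorem canonical_min_max_duality_general {n m : ℕ}
    (A : Matrix (Fin n) (Fin n) ℝ) (B : Fin m → Matrix (Fin n) (Fin n) ℝ)
    (b : Fin m → (Fin n → ℝ)) (f : Fin n → ℝ)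
    (V : (Fin m → ℝ) → ℝ)
    (hV : ConvexOn ℝ Set.univ V) (hVd : Differentiable ℝ V)
    (Λ : (Fin n → ℝ) → (Fin m → ℝ))
    (hΛ : Λ = fun x k => (1/2) * (x ⬝ᵥ (B k) *ᵥ x) + (b k) ⬝ᵥ x)
    (G : (Fin m → ℝ) → Matrix (Fin n) (Fin n) ℝ)
    (hG : G = fun σ => A + ∑ k, σ k • B k)
    (F : (Fin m → ℝ) → (Fin n → ℝ))
    (hF : F = fun σ => f - ∑ k, σ k • b k)
    (Pr : (Fin n → ℝ) → ℝ)
    (hPr : Pr = fun x => V (Λ x) + (1/2) * (x ⬝ᵥ A *ᵥ x) - x ⬝ᵥ f)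
    (σbar : Fin m → ℝ) (xbar : Fin n → ℝ)
    -- criticality: σ̄ = ∇V(Λ(x̄)) and G(σ̄)x̄ = F(σ̄)
    (hσ : σbar = fun k => fderiv ℝ V (Λ xbar) (Pi.single k 1))
    (heq : (G σbar) *ᵥ xbar = F σbar)
    (hpsd : (G σbar).PosSemidef) :
    ∀ x : Fin n → ℝ, Pr xbar ≤ Pr x := by
  intro x
  have hconv : V (Λ xbar) + σbar ⬝ᵥ (Λ x - Λ xbar) ≤ V (Λ x) := by
    have hgrad := (fderiv ℝ V (Λ xbar)).toLinearMap.apply_eq_dotProduct_apply_single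
      (Λ x - Λ xbar)
    simp only [ContinuousLinearMap.coe_coe, ← hσ] at hgrad
    simpa [hgrad] using hV.add_apply_sub_le_of_hasFDerivAt (Set.mem_univ (Λ xbar))
      (Set.mem_univ (Λ x)) (hVd (Λ xbar)).hasFDerivAt
  have henergy := quadraticEnergy_le_of_posSemidef hpsd heq x
  simp only [hG, hF, quadraticEnergy_add_sum_smul] at henergy
  subst hΛ hPr
  simp only [quadraticEnergy, dotProduct_sub] at henergy hconv ⊢
  linarith

/-- Canonical min-max duality (Gao–Strang): if `σ̄` is a critical point of `Π^d`
with `G(σ̄) ⪰ 0` and `G(σ̄) x̄ = F(σ̄)`, then `x̄` is a global minimizer of `Π`. -/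
theorem canonical_min_max_duality {n m : ℕ}
    (A : Matrix (Fin n) (Fin n) ℝ) (B : Fin m → Matrix (Fin n) (Fin n) ℝ)
    (b : Fin m → (Fin n → ℝ)) (f : Fin n → ℝ)
    (V : (Fin m → ℝ) → ℝ)
    (hA : A.IsSymm) (hB : ∀ k, (B k).IsSymm)
    (hV : ConvexOn ℝ Set.univ V) (hVd : Differentiable ℝ V)
    (Λ : (Fin n → ℝ) → (Fin m → ℝ))
    (hΛ : Λ = fun x k => (1/2) * (x ⬝ᵥ (B k) *ᵥ x) + (b k) ⬝ᵥ x)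
    (G : (Fin m → ℝ) → Matrix (Fin n) (Fin n) ℝ)
    (hG : G = fun σ => A + ∑ k, σ k • B k)
    (F : (Fin m → ℝ) → (Fin n → ℝ))
    (hF : F = fun σ => f - ∑ k, σ k • b k)
    (Pr : (Fin n → ℝ) → ℝ)
    (hPr : Pr = fun x => V (Λ x) + (1/2) * (x ⬝ᵥ A *ᵥ x) - x ⬝ᵥ f)
    (σbar : Fin m → ℝ) (xbar : Fin n → ℝ)
    -- criticality: σ̄ = ∇V(Λ(x̄)) and G(σ̄)x̄ = F(σ̄)
    (hσ : σbar = fun k => fderiv ℝ V (Λ xbar) (Pi.single k 1))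
    (heq : (G σbar) *ᵥ xbar = F σbar)
    (hpsd : (G σbar).PosSemidef) :
    ∀ x : Fin n → ℝ, Pr xbar ≤ Pr x :=
  canonical_min_max_duality_general A B b f V hV hVd Λ hΛ G hG F hF Pr hPr σbar xbar hσ heq hpsd
end

section
/- Key convexity inequality in the min-max duality proof: if V is convex differentiable, σ̄ = ∇V(Λ(x̄)), G(σ̄) ⪰ 0, and G(σ̄)x̄ = F(σ̄), then for all x ∈ ℝ^n, Π(x) - Π(x̄) ≥ ⟨x - x̄, G(σ̄)x̄ - F(σ̄)⟩ = 0, where Π(x) = V(Λ(x)) + ½x^T A x - x^T f. -/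
/-!
With `σ̄ = ∇V(Λ x̄)`, split `Π(x) = [V(Λ x) - ⟨σ̄, Λ x⟩] + [½ xᵀG(σ̄)x - xᵀF(σ̄)]`.
The gradient inequality for `V` makes the first bracket no smaller at `x` than at `x̄`,
and since `G(σ̄) ⪰ 0` the increment of the second bracket is at least
`⟨x - x̄, G(σ̄)x̄ - F(σ̄)⟩`, which vanishes because `G(σ̄)x̄ = F(σ̄)`.
-/

open Matrix

theorem ConvexOn.fderiv_sub_le {E : Type*} [NormedAddCommGroup E] [NormedSpace ℝ E]
    {s : Set E} {f : E → ℝ} {p q : E} (hf : ConvexOn ℝ s f) (hp : p ∈ s) (hq : q ∈ s)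
    (hfp : DifferentiableAt ℝ f p) : fderiv ℝ f p (q - p) ≤ f q - f p := by
  set ℓ : ℝ →ᵃ[ℝ] E := AffineMap.lineMap p q
  have hconv : ConvexOn ℝ (ℓ ⁻¹' s) (f ∘ ℓ) := hf.comp_affineMap ℓ
  have hderiv : HasDerivAt (f ∘ ℓ) (fderiv ℝ f p (q - p)) 0 := by
    have hfp' : HasFDerivAt f (fderiv ℝ f p) (ℓ 0) := by simpa [ℓ] using hfp.hasFDerivAt
    exact hfp'.comp_hasDerivAt 0 AffineMap.hasDerivAt_lineMap
  simpa [slope_def_field, ℓ] using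
    hconv.le_slope_of_hasDerivAt (by simpa [ℓ] using hp) (by simpa [ℓ] using hq) zero_lt_one
      hderiv

theorem map_eq_dotProduct {ι R F : Type*} [Fintype ι] [DecidableEq ι] [CommSemiring R]
    [FunLike F (ι → R) R] [LinearMapClass F R (ι → R) R] (L : F) (v : ι → R) :
    L v = (fun k => L (Pi.single k 1)) ⬝ᵥ v := by
  conv_lhs => rw [← Finset.univ_sum_single v]
  simp only [map_sum, dotProduct]
  refine Finset.sum_congr rfl fun k _ => ?_
  rw [mul_comm, ← smul_eq_mul, ← map_smul, ← Pi.single_smul, smul_eq_mul, mul_one]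

theorem Matrix.PosSemidef.dotProduct_sub_mulVec_le {n R : Type*} [Fintype n] [Field R]
    [LinearOrder R] [IsStrictOrderedRing R] [StarRing R] [TrivialStar R]
    {G : Matrix n n R} (hG : G.PosSemidef) (x y : n → R) :
    (x - y) ⬝ᵥ G *ᵥ y ≤ (x ⬝ᵥ G *ᵥ x) / 2 - (y ⬝ᵥ G *ᵥ y) / 2 := by
  have hsymm : y ⬝ᵥ G *ᵥ x = x ⬝ᵥ G *ᵥ y := by
    rw [← dotProduct_transpose_mulVec, (isHermitian_iff_isSymm.mp hG.isHermitian).eq]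
  have hnonneg := hG.dotProduct_mulVec_nonneg (x - y)
  simp only [star_trivial, mulVec_sub, dotProduct_sub, sub_dotProduct, hsymm] at hnonneg ⊢
  linarith

theorem lagrangian_eq {ι n R : Type*} [Fintype ι] [Fintype n] [CommRing R]
    (A : Matrix n n R) (B : ι → Matrix n n R) (b : ι → n → R) (f : n → R) (σ : ι → R)
    (c : R) (x : n → R) :
    σ ⬝ᵥ (fun k => c * (x ⬝ᵥ B k *ᵥ x) + b k ⬝ᵥ x) + c * (x ⬝ᵥ A *ᵥ x) - x ⬝ᵥ f =
      c * (x ⬝ᵥ (A + ∑ k, σ k • B k) *ᵥ x) - x ⬝ᵥ (f - ∑ k, σ k • b k) := by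
  have hΛ : σ ⬝ᵥ (fun k => c * (x ⬝ᵥ B k *ᵥ x) + b k ⬝ᵥ x) =
      c * ∑ k, σ k * (x ⬝ᵥ B k *ᵥ x) + ∑ k, σ k * (x ⬝ᵥ b k) := by
    simp only [dotProduct, Finset.mul_sum, ← Finset.sum_add_distrib]
    exact Finset.sum_congr rfl fun k _ => Finset.sum_congr rfl fun i _ => by ring
  simp only [hΛ, add_mulVec, sum_mulVec, smul_mulVec, dotProduct_add, dotProduct_sub,
    dotProduct_sum, dotProduct_smul, smul_eq_mul]
  ring

theorem key_convexity_inequality_general {n m : ℕ}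
    (A : Matrix (Fin n) (Fin n) ℝ) (B : Fin m → Matrix (Fin n) (Fin n) ℝ)
    (b : Fin m → (Fin n → ℝ)) (f : Fin n → ℝ)
    (V : (Fin m → ℝ) → ℝ)
    (hV : ConvexOn ℝ Set.univ V) (hVd : Differentiable ℝ V)
    (Λ : (Fin n → ℝ) → (Fin m → ℝ))
    (hΛ : Λ = fun x k => (1/2) * (x ⬝ᵥ (B k) *ᵥ x) + (b k) ⬝ᵥ x)
    (G : (Fin m → ℝ) → Matrix (Fin n) (Fin n) ℝ)
    (hG : G = fun σ => A + ∑ k, σ k • B k)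
    (F : (Fin m → ℝ) → (Fin n → ℝ))
    (hF : F = fun σ => f - ∑ k, σ k • b k)
    (Pr : (Fin n → ℝ) → ℝ)
    (hPr : Pr = fun x => V (Λ x) + (1/2) * (x ⬝ᵥ A *ᵥ x) - x ⬝ᵥ f)
    (σbar : Fin m → ℝ) (xbar : Fin n → ℝ)
    (hσ : σbar = fun k => fderiv ℝ V (Λ xbar) (Pi.single k 1))
    (hpsd : (G σbar).PosSemidef)
    (heq : (G σbar) *ᵥ xbar = F σbar) :
    ∀ x : Fin n → ℝ,
      Pr x - Pr xbar ≥ (x - xbar) ⬝ᵥ ((G σbar) *ᵥ xbar - F σbar) ∧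
      (x - xbar) ⬝ᵥ ((G σbar) *ᵥ xbar - F σbar) = 0 := by
  intro x
  have hzero : (x - xbar) ⬝ᵥ (G σbar *ᵥ xbar - F σbar) = 0 := by
    rw [heq, sub_self, dotProduct_zero]
  have hlagrangian : ∀ y, Pr y =
      V (Λ y) - σbar ⬝ᵥ Λ y + ((1/2) * (y ⬝ᵥ G σbar *ᵥ y) - y ⬝ᵥ F σbar) := by
    intro y
    have := lagrangian_eq A B b f σbar (1/2) y
    subst hPr hG hF hΛ
    linarith
  have hgrad : σbar ⬝ᵥ (Λ x - Λ xbar) ≤ V (Λ x) - V (Λ xbar) := by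
    rw [hσ, ← map_eq_dotProduct]
    exact hV.fderiv_sub_le trivial trivial (hVd _)
  have hquad := hpsd.dotProduct_sub_mulVec_le x xbar
  refine ⟨?_, hzero⟩
  rw [hzero, hlagrangian x, hlagrangian xbar, ← heq]
  simp only [dotProduct_sub, sub_dotProduct] at hgrad hquad
  linarith

/-- Key convexity inequality in the min-max duality proof:
`Π(x) - Π(x̄) ≥ ⟨x - x̄, G(σ̄)x̄ - F(σ̄)⟩ = 0` for all `x`. -/
theorem key_convexity_inequality {n m : ℕ}
    (A : Matrix (Fin n) (Fin n) ℝ) (B : Fin m → Matrix (Fin n) (Fin n) ℝ)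
    (b : Fin m → (Fin n → ℝ)) (f : Fin n → ℝ)
    (V : (Fin m → ℝ) → ℝ)
    (hA : A.IsSymm) (hB : ∀ k, (B k).IsSymm)
    (hV : ConvexOn ℝ Set.univ V) (hVd : Differentiable ℝ V)
    (Λ : (Fin n → ℝ) → (Fin m → ℝ))
    (hΛ : Λ = fun x k => (1/2) * (x ⬝ᵥ (B k) *ᵥ x) + (b k) ⬝ᵥ x)
    (G : (Fin m → ℝ) → Matrix (Fin n) (Fin n) ℝ)
    (hG : G = fun σ => A + ∑ k, σ k • B k)
    (F : (Fin m → ℝ) → (Fin n → ℝ))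
    (hF : F = fun σ => f - ∑ k, σ k • b k)
    (Pr : (Fin n → ℝ) → ℝ)
    (hPr : Pr = fun x => V (Λ x) + (1/2) * (x ⬝ᵥ A *ᵥ x) - x ⬝ᵥ f)
    (σbar : Fin m → ℝ) (xbar : Fin n → ℝ)
    (hσ : σbar = fun k => fderiv ℝ V (Λ xbar) (Pi.single k 1))
    (hpsd : (G σbar).PosSemidef)
    (heq : (G σbar) *ᵥ xbar = F σbar) :
    ∀ x : Fin n → ℝ,
      Pr x - Pr xbar ≥ (x - xbar) ⬝ᵥ ((G σbar) *ᵥ xbar - F σbar) ∧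
      (x - xbar) ⬝ᵥ ((G σbar) *ᵥ xbar - F σbar) = 0 :=
  key_convexity_inequality_general A B b f V hV hVd Λ hΛ G hG F hF Pr hPr σbar xbar hσ hpsd heq
end

section
/- Hessian of the canonical dual: at a critical point σ̄ with G(σ̄) invertible and x̄ = G(σ̄)⁻¹F(σ̄), the Hessian of Π^d(σ) = -½⟨G(σ)⁻¹F(σ),F(σ)⟩ - V*(σ) equals -(∇Λ(x̄))^T G(σ̄)⁻¹ ∇Λ(x̄) - ∇²V*(σ̄), where ∇Λ(x̄) is the n×m matrix with k-th column B^k x̄ + b_k. -/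
/-!
Write `x(σ) = G(σ)⁻¹ F(σ)`. Differentiating `⟨G⁻¹F, F⟩` and using the symmetry of `G(σ)` gives the
canonical duality relation `∇Π^d(σ) = Λ(x(σ)) - ∇V*(σ)` wherever `G(σ)` is invertible, and
differentiating `G(σ) x(σ) = F(σ)` gives `Dx(σ) = -G(σ)⁻¹ ∇Λ(x(σ))`. Since `B^k` is symmetric,
`DΛ(x) = ∇Λ(x)ᵀ`, so the chain rule yields `∇²Π^d = -∇Λᵀ G⁻¹ ∇Λ - ∇²V*`.
-/

open Matrix

section MatrixAlgebra

variable {R : Type*} [CommSemiring R] {κ n : Type*} [Fintype κ]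

theorem Matrix.isSymm_sum_smul {B : κ → Matrix n n R} (hB : ∀ k, (B k).IsSymm) (v : κ → R) :
    (∑ k, v k • B k).IsSymm := by
  rw [IsSymm, transpose_sum]
  exact Finset.sum_congr rfl fun k _ => ((hB k).smul (v k)).eq

variable [Fintype n]

theorem Matrix.IsSymm.mulVec_dotProduct {S : Matrix n n R} (hS : S.IsSymm) (x y : n → R) :
    (S *ᵥ x) ⬝ᵥ y = x ⬝ᵥ (S *ᵥ y) := by
  rw [dotProduct_mulVec, ← mulVec_transpose, hS.eq]

theorem Matrix.transpose_mul_mul_apply [DecidableEq κ] (J : Matrix n κ R) (N : Matrix n n R)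
    (k l : κ) : (Jᵀ * N * J) k l = (J *ᵥ Pi.single k 1) ⬝ᵥ (N *ᵥ (J *ᵥ Pi.single l 1)) := by
  rw [mulVec_single_one, mulVec_single_one, Matrix.mul_assoc, mul_apply']
  rfl

end MatrixAlgebra

section LinearCombination

variable {κ V : Type*} [Fintype κ] [NormedAddCommGroup V] [NormedSpace ℝ V]

theorem differentiable_sum_smul (c : κ → V) :
    Differentiable ℝ fun τ : κ → ℝ => ∑ k, τ k • c k := by
  fun_prop

theorem fderiv_sum_smul_apply (c : κ → V) (σ v : κ → ℝ) :
    fderiv ℝ (fun τ : κ → ℝ => ∑ k, τ k • c k) σ v = ∑ k, v k • c k := by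
  have h : (fun τ : κ → ℝ => ∑ k, τ k • c k) =
      LinearMap.toContinuousLinearMap (Fintype.linearCombination ℝ c) :=
    funext fun τ => (Fintype.linearCombination_apply ℝ c τ).symm
  rw [h, ContinuousLinearMap.fderiv]
  exact Fintype.linearCombination_apply ℝ c v

end LinearCombination

-- Matrices carry no global norm; all norms on them are equivalent, so this choice does not affect
-- any derivative.
attribute [local instance] Matrix.linftyOpNormedRing Matrix.linftyOpNormedAlgebra

section Calculus

variable {E : Type*} [NormedAddCommGroup E] [NormedSpace ℝ E] {σ : E}

variable {n : Type*} [Fintype n]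

section DotProduct

variable {u w : E → n → ℝ}

noncomputable def Matrix.dotProductL : (n → ℝ) →L[ℝ] (n → ℝ) →L[ℝ] ℝ :=
  (dotProductBilin ℝ ℝ).toContinuousBilinearMap

@[simp]
theorem Matrix.dotProductL_apply (x y : n → ℝ) : dotProductL x y = x ⬝ᵥ y := rfl

theorem DifferentiableAt.dotProduct (hu : DifferentiableAt ℝ u σ) (hw : DifferentiableAt ℝ w σ) :
    DifferentiableAt ℝ (fun τ => u τ ⬝ᵥ w τ) σ :=
  (dotProductL.hasFDerivAt_of_bilinear hu.hasFDerivAt hw.hasFDerivAt).differentiableAt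

theorem fderiv_dotProduct_apply (hu : DifferentiableAt ℝ u σ) (hw : DifferentiableAt ℝ w σ)
    (v : E) :
    fderiv ℝ (fun τ => u τ ⬝ᵥ w τ) σ v = fderiv ℝ u σ v ⬝ᵥ w σ + u σ ⬝ᵥ fderiv ℝ w σ v := by
  rw [show (fun τ => u τ ⬝ᵥ w τ) = fun τ => dotProductL (u τ) (w τ) from rfl,
    dotProductL.fderiv_of_bilinear hu hw]
  exact add_comm _ _

end DotProduct

-- The type of `mulVecL` uses the product topology on matrices rather than that of the norm above;
-- the two agree only up to unfolding, so rewriting with its derivative needs `erw`.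
noncomputable def Matrix.mulVecL : Matrix n n ℝ →L[ℝ] (n → ℝ) →L[ℝ] n → ℝ :=
  (mulVecBilin ℝ ℝ).toContinuousBilinearMap

@[simp]
theorem Matrix.mulVecL_apply (M : Matrix n n ℝ) (x : n → ℝ) : mulVecL M x = M *ᵥ x := rfl

theorem Matrix.IsSymm.fderiv_quadratic_apply {S : Matrix n n ℝ} (hS : S.IsSymm) (c x w : n → ℝ) :
    fderiv ℝ (fun y => 1 / 2 * (y ⬝ᵥ (S *ᵥ y)) + c ⬝ᵥ y) x w = (S *ᵥ x + c) ⬝ᵥ w := by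
  have hSy : DifferentiableAt ℝ (fun y => S *ᵥ y) x := (mulVecL S).differentiableAt
  have hcy : DifferentiableAt ℝ (fun y => c ⬝ᵥ y) x := (dotProductL c).differentiableAt
  have hq : DifferentiableAt ℝ (fun y => y ⬝ᵥ (S *ᵥ y)) x := differentiableAt_fun_id.dotProduct hSy
  rw [fderiv_fun_add (hq.const_mul _) hcy, _root_.add_apply, fderiv_const_mul hq, _root_.smul_apply,
    fderiv_dotProduct_apply (u := fun y => y) differentiableAt_fun_id hSy]
  erw [(mulVecL S).fderiv, (dotProductL c).fderiv]
  simp only [fderiv_fun_id, ContinuousLinearMap.id_apply, smul_eq_mul, mulVecL_apply,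
    dotProductL_apply]
  rw [add_dotProduct, dotProduct_comm w, hS.mulVec_dotProduct]
  ring

variable [DecidableEq n] {M : E → Matrix n n ℝ} {u : E → n → ℝ}

theorem DifferentiableAt.mulVec (hM : DifferentiableAt ℝ M σ) (hu : DifferentiableAt ℝ u σ) :
    DifferentiableAt ℝ (fun τ => M τ *ᵥ u τ) σ :=
  (mulVecL.hasFDerivAt_of_bilinear hM.hasFDerivAt hu.hasFDerivAt).differentiableAt

theorem fderiv_mulVec_apply (hM : DifferentiableAt ℝ M σ) (hu : DifferentiableAt ℝ u σ) (v : E) :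
    fderiv ℝ (fun τ => M τ *ᵥ u τ) σ v = fderiv ℝ M σ v *ᵥ u σ + M σ *ᵥ fderiv ℝ u σ v := by
  erw [mulVecL.fderiv_of_bilinear hM hu]
  exact add_comm _ _

theorem DifferentiableAt.matrix_inv (hM : DifferentiableAt ℝ M σ) (hdet : IsUnit (M σ).det) :
    DifferentiableAt ℝ (fun τ => (M τ)⁻¹) σ := by
  simp only [nonsing_inv_eq_ringInverse]
  exact hM.inverse ((isUnit_iff_isUnit_det _).mpr hdet)

theorem fderiv_matrix_inv_apply (hM : DifferentiableAt ℝ M σ) (hdet : IsUnit (M σ).det) (v : E) :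
    fderiv ℝ (fun τ => (M τ)⁻¹) σ v = -((M σ)⁻¹ * fderiv ℝ M σ v * (M σ)⁻¹) := by
  obtain ⟨U, hU⟩ := (isUnit_iff_isUnit_det _).mpr hdet
  have h := hasFDerivAt_ringInverse (𝕜 := ℝ) U
  rw [hU] at h
  simp only [nonsing_inv_eq_ringInverse]
  change fderiv ℝ (Ring.inverse ∘ M) σ v = _
  erw [(h.comp σ hM.hasFDerivAt).fderiv]
  rw [← hU, Ring.inverse_unit]
  rfl

theorem fderiv_matrix_inv_mulVec_apply (hM : DifferentiableAt ℝ M σ) (hu : DifferentiableAt ℝ u σ)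
    (hdet : IsUnit (M σ).det) (v : E) :
    fderiv ℝ (fun τ => (M τ)⁻¹ *ᵥ u τ) σ v =
      (M σ)⁻¹ *ᵥ (fderiv ℝ u σ v - fderiv ℝ M σ v *ᵥ ((M σ)⁻¹ *ᵥ u σ)) := by
  rw [fderiv_mulVec_apply (hM.matrix_inv hdet) hu, fderiv_matrix_inv_apply hM hdet, mulVec_sub,
    neg_mulVec, ← mulVec_mulVec, ← mulVec_mulVec]
  abel

theorem fderiv_matrix_inv_mulVec_dotProduct_apply (hM : DifferentiableAt ℝ M σ)
    (hu : DifferentiableAt ℝ u σ) (hdet : IsUnit (M σ).det) (hsymm : (M σ).IsSymm) (v : E) :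
    fderiv ℝ (fun τ => ((M τ)⁻¹ *ᵥ u τ) ⬝ᵥ u τ) σ v =
      2 * (fderiv ℝ u σ v ⬝ᵥ ((M σ)⁻¹ *ᵥ u σ)) -
        (fderiv ℝ M σ v *ᵥ ((M σ)⁻¹ *ᵥ u σ)) ⬝ᵥ ((M σ)⁻¹ *ᵥ u σ) := by
  rw [fderiv_dotProduct_apply ((hM.matrix_inv hdet).mulVec hu) hu,
    fderiv_matrix_inv_mulVec_apply hM hu hdet, hsymm.inv.mulVec_dotProduct, sub_dotProduct,
    dotProduct_comm ((M σ)⁻¹ *ᵥ u σ)]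
  ring

end Calculus

namespace CanonicalDual

-- `pencil`, `load`, `primalPoint`, `dualFunction`, `geomMeasure` and `geomMeasureJacobian` are the
-- paper's `G`, `F`, `x(σ)`, `Π^d`, `Λ` and `∇Λ`.

variable {ι κ : Type*} [Fintype κ]

def pencil (A : Matrix ι ι ℝ) (B : κ → Matrix ι ι ℝ) (σ : κ → ℝ) : Matrix ι ι ℝ :=
  A + ∑ k, σ k • B k

def load (b : κ → ι → ℝ) (f : ι → ℝ) (σ : κ → ℝ) : ι → ℝ := f - ∑ k, σ k • b k

variable {A : Matrix ι ι ℝ} {B : κ → Matrix ι ι ℝ} {b : κ → ι → ℝ} {f : ι → ℝ}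
  {Vs : (κ → ℝ) → ℝ} {σ : κ → ℝ}

theorem isSymm_pencil (hA : A.IsSymm) (hB : ∀ k, (B k).IsSymm) (σ : κ → ℝ) :
    (pencil A B σ).IsSymm :=
  hA.add (Matrix.isSymm_sum_smul hB σ)

section Geometry

variable [Fintype ι]

noncomputable def geomMeasure (B : κ → Matrix ι ι ℝ) (b : κ → ι → ℝ) (x : ι → ℝ) (k : κ) : ℝ :=
  1 / 2 * (x ⬝ᵥ (B k *ᵥ x)) + b k ⬝ᵥ x

def geomMeasureJacobian (B : κ → Matrix ι ι ℝ) (b : κ → ι → ℝ) (x : ι → ℝ) : Matrix ι κ ℝ :=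
  of fun i k => (B k *ᵥ x + b k) i

theorem geomMeasureJacobian_mulVec (x : ι → ℝ) (v : κ → ℝ) :
    geomMeasureJacobian B b x *ᵥ v = ∑ k, v k • (B k *ᵥ x + b k) := by
  ext i
  simp [geomMeasureJacobian, mulVec, dotProduct, mul_add, mul_comm]

theorem geomMeasure_dotProduct (x : ι → ℝ) (v : κ → ℝ) :
    geomMeasure B b x ⬝ᵥ v = 1 / 2 * (x ⬝ᵥ ((∑ k, v k • B k) *ᵥ x)) + (∑ k, v k • b k) ⬝ᵥ x := by
  simp only [sum_mulVec, smul_mulVec, dotProduct_sum, sum_dotProduct, dotProduct_smul,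
    smul_dotProduct, smul_eq_mul, Finset.mul_sum, ← Finset.sum_add_distrib]
  exact Finset.sum_congr rfl fun k _ => by simp only [geomMeasure]; ring

theorem differentiable_geomMeasure_dotProduct (v : κ → ℝ) :
    Differentiable ℝ fun x => geomMeasure B b x ⬝ᵥ v := by
  simp only [geomMeasure_dotProduct]
  intro x
  exact ((differentiableAt_fun_id.dotProduct (mulVecL _).differentiableAt).const_mul _).add
    (dotProductL _).differentiableAt

theorem fderiv_geomMeasure_dotProduct_apply (hB : ∀ k, (B k).IsSymm) (v : κ → ℝ) (x w : ι → ℝ) :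
    fderiv ℝ (fun y => geomMeasure B b y ⬝ᵥ v) x w = (geomMeasureJacobian B b x *ᵥ v) ⬝ᵥ w := by
  simp only [geomMeasure_dotProduct]
  rw [(Matrix.isSymm_sum_smul hB v).fderiv_quadratic_apply, geomMeasureJacobian_mulVec]
  simp only [smul_add, Finset.sum_add_distrib, sum_mulVec, smul_mulVec]

theorem differentiable_load : Differentiable ℝ (load b f) :=
  (differentiable_sum_smul b).const_sub f

theorem fderiv_load_apply (v : κ → ℝ) : fderiv ℝ (load b f) σ v = -∑ k, v k • b k := by
  erw [fderiv_const_sub, _root_.neg_apply, fderiv_sum_smul_apply]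

end Geometry

variable [Fintype ι] [DecidableEq ι]

noncomputable def primalPoint (A : Matrix ι ι ℝ) (B : κ → Matrix ι ι ℝ) (b : κ → ι → ℝ) (f : ι → ℝ)
    (σ : κ → ℝ) : ι → ℝ :=
  (pencil A B σ)⁻¹ *ᵥ load b f σ

noncomputable def dualFunction (A : Matrix ι ι ℝ) (B : κ → Matrix ι ι ℝ) (b : κ → ι → ℝ) (f : ι → ℝ)
    (Vs : (κ → ℝ) → ℝ) (σ : κ → ℝ) : ℝ :=
  -(1 / 2) * (primalPoint A B b f σ ⬝ᵥ load b f σ) - Vs σ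

theorem differentiable_pencil : Differentiable ℝ (pencil A B) :=
  (differentiable_sum_smul B).const_add A

theorem fderiv_pencil_apply (v : κ → ℝ) : fderiv ℝ (pencil A B) σ v = ∑ k, v k • B k := by
  erw [fderiv_const_add, fderiv_sum_smul_apply]

theorem eventually_isUnit_det_pencil (hσ : IsUnit (pencil A B σ).det) :
    ∀ᶠ τ in nhds σ, IsUnit (pencil A B τ).det := by
  simp only [← isUnit_iff_isUnit_det]
  exact differentiable_pencil.continuous.continuousAt.eventually_mem
    (Units.isOpen.mem_nhds ((isUnit_iff_isUnit_det _).mpr hσ))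

theorem differentiableAt_primalPoint (hσ : IsUnit (pencil A B σ).det) :
    DifferentiableAt ℝ (primalPoint A B b f) σ :=
  ((differentiable_pencil σ).matrix_inv hσ).mulVec (differentiable_load σ)

theorem fderiv_primalPoint_apply (hσ : IsUnit (pencil A B σ).det) (v : κ → ℝ) :
    fderiv ℝ (primalPoint A B b f) σ v =
      -((pencil A B σ)⁻¹ *ᵥ (geomMeasureJacobian B b (primalPoint A B b f σ) *ᵥ v)) := by
  erw [fderiv_matrix_inv_mulVec_apply (differentiable_pencil σ) (differentiable_load σ) hσ]
  rw [fderiv_pencil_apply, fderiv_load_apply, geomMeasureJacobian_mulVec, ← mulVec_neg]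
  congr 1
  simp only [primalPoint, sum_mulVec, smul_mulVec, smul_add, Finset.sum_add_distrib]
  abel

theorem fderiv_dualFunction_apply (hA : A.IsSymm) (hB : ∀ k, (B k).IsSymm)
    (hσ : IsUnit (pencil A B σ).det) (hVs : DifferentiableAt ℝ Vs σ) (v : κ → ℝ) :
    fderiv ℝ (dualFunction A B b f Vs) σ v =
      geomMeasure B b (primalPoint A B b f σ) ⬝ᵥ v - fderiv ℝ Vs σ v := by
  have hq : DifferentiableAt ℝ (fun τ => (pencil A B τ)⁻¹ *ᵥ load b f τ ⬝ᵥ load b f τ) σ :=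
    (differentiableAt_primalPoint hσ).dotProduct (differentiable_load σ)
  erw [fderiv_fun_sub (hq.const_mul _) hVs]
  rw [_root_.sub_apply, fderiv_const_mul hq, _root_.smul_apply,
    fderiv_matrix_inv_mulVec_dotProduct_apply (differentiable_pencil σ) (differentiable_load σ) hσ
      (isSymm_pencil hA hB σ),
    fderiv_pencil_apply, fderiv_load_apply, geomMeasure_dotProduct, neg_dotProduct,
    dotProduct_comm ((∑ k, v k • B k) *ᵥ _)]
  simp only [primalPoint, smul_eq_mul]
  ring

theorem fderiv_fderiv_dualFunction_apply (hA : A.IsSymm) (hB : ∀ k, (B k).IsSymm)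
    (hσ : IsUnit (pencil A B σ).det) (hVs : ContDiff ℝ 2 Vs) (v w : κ → ℝ) :
    fderiv ℝ (fun τ => fderiv ℝ (dualFunction A B b f Vs) τ v) σ w =
      -((geomMeasureJacobian B b (primalPoint A B b f σ) *ᵥ w) ⬝ᵥ
          ((pencil A B σ)⁻¹ *ᵥ (geomMeasureJacobian B b (primalPoint A B b f σ) *ᵥ v))) -
        fderiv ℝ (fun τ => fderiv ℝ Vs τ v) σ w := by
  have hgrad : (fun τ => fderiv ℝ (dualFunction A B b f Vs) τ v) =ᶠ[nhds σ]
      fun τ => geomMeasure B b (primalPoint A B b f τ) ⬝ᵥ v - fderiv ℝ Vs τ v :=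
    (eventually_isUnit_det_pencil hσ).mono fun τ hτ =>
      fderiv_dualFunction_apply hA hB hτ (hVs.differentiable (by norm_num) τ) v
  have hdVs : Differentiable ℝ fun τ => fderiv ℝ Vs τ v :=
    ((hVs.fderiv_right (m := 1) (by norm_num)).differentiable (by norm_num)).clm_apply
      (differentiable_const v)
  have hΛx : DifferentiableAt ℝ (fun τ => geomMeasure B b (primalPoint A B b f τ) ⬝ᵥ v) σ :=
    DifferentiableAt.comp (g := fun y => geomMeasure B b y ⬝ᵥ v) σ
      (differentiable_geomMeasure_dotProduct v _) (differentiableAt_primalPoint hσ)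
  have hchain : fderiv ℝ (fun τ => geomMeasure B b (primalPoint A B b f τ) ⬝ᵥ v) σ =
      (fderiv ℝ (fun y => geomMeasure B b y ⬝ᵥ v) (primalPoint A B b f σ)).comp
        (fderiv ℝ (primalPoint A B b f) σ) :=
    fderiv_comp (g := fun y => geomMeasure B b y ⬝ᵥ v) σ
      (differentiable_geomMeasure_dotProduct v _) (differentiableAt_primalPoint hσ)
  rw [hgrad.fderiv_eq, fderiv_fun_sub hΛx (hdVs σ), _root_.sub_apply, hchain,
    ContinuousLinearMap.comp_apply, fderiv_primalPoint_apply hσ,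
    fderiv_geomMeasure_dotProduct_apply hB, dotProduct_neg,
    ← (isSymm_pencil hA hB σ).inv.mulVec_dotProduct, dotProduct_comm]

end CanonicalDual

theorem hessian_dual_general {n m : ℕ}
    (A : Matrix (Fin n) (Fin n) ℝ) (B : Fin m → Matrix (Fin n) (Fin n) ℝ)
    (b : Fin m → (Fin n → ℝ)) (f : Fin n → ℝ)
    (Vs : (Fin m → ℝ) → ℝ) (hVs : ContDiff ℝ 2 Vs)
    (hA : A.IsSymm) (hB : ∀ k, (B k).IsSymm)
    (G : (Fin m → ℝ) → Matrix (Fin n) (Fin n) ℝ)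
    (hG : G = fun σ => A + ∑ k, σ k • B k)
    (F : (Fin m → ℝ) → (Fin n → ℝ))
    (hF : F = fun σ => f - ∑ k, σ k • b k)
    (Pd : (Fin m → ℝ) → ℝ)
    (hPd : Pd = fun σ => -(1/2) * (((G σ)⁻¹ *ᵥ F σ) ⬝ᵥ F σ) - Vs σ)
    (σbar : Fin m → ℝ) (hGinv : IsUnit (G σbar).det)
    (xbar : Fin n → ℝ) (hxbar : xbar = (G σbar)⁻¹ *ᵥ F σbar)
    -- ∇Λ(x̄) : the n×m matrix whose k-th column is B^k x̄ + b_k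
    (L : Matrix (Fin n) (Fin m) ℝ)
    (hL : L = Matrix.of fun i k => ((B k) *ᵥ xbar + b k) i) :
    (Matrix.of fun k l : Fin m =>
        fderiv ℝ (fun σ => fderiv ℝ Pd σ (Pi.single l 1)) σbar (Pi.single k 1)) =
      -(Lᵀ * (G σbar)⁻¹ * L) -
      (Matrix.of fun k l : Fin m =>
        fderiv ℝ (fun σ => fderiv ℝ Vs σ (Pi.single l 1)) σbar (Pi.single k 1)) := by
  change G = CanonicalDual.pencil A B at hG
  change F = CanonicalDual.load b f at hF
  subst hG hF
  change Pd = CanonicalDual.dualFunction A B b f Vs at hPd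
  change xbar = CanonicalDual.primalPoint A B b f σbar at hxbar
  change L = CanonicalDual.geomMeasureJacobian B b xbar at hL
  subst hPd hxbar hL
  ext k l
  rw [of_apply, CanonicalDual.fderiv_fderiv_dualFunction_apply hA hB hGinv hVs, Matrix.sub_apply,
    Matrix.neg_apply, of_apply, transpose_mul_mul_apply]

/-- Hessian of the canonical dual at a critical point:
`∇²Π^d(σ̄) = -(∇Λ(x̄))ᵀ G(σ̄)⁻¹ ∇Λ(x̄) - ∇²V*(σ̄)`. -/
theorem hessian_dual {n m : ℕ}
    (A : Matrix (Fin n) (Fin n) ℝ) (B : Fin m → Matrix (Fin n) (Fin n) ℝ)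
    (b : Fin m → (Fin n → ℝ)) (f : Fin n → ℝ)
    (Vs : (Fin m → ℝ) → ℝ) (hVs : ContDiff ℝ 2 Vs)
    (hA : A.IsSymm) (hB : ∀ k, (B k).IsSymm)
    (G : (Fin m → ℝ) → Matrix (Fin n) (Fin n) ℝ)
    (hG : G = fun σ => A + ∑ k, σ k • B k)
    (F : (Fin m → ℝ) → (Fin n → ℝ))
    (hF : F = fun σ => f - ∑ k, σ k • b k)
    (Pd : (Fin m → ℝ) → ℝ)
    (hPd : Pd = fun σ => -(1/2) * (((G σ)⁻¹ *ᵥ F σ) ⬝ᵥ F σ) - Vs σ)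
    (σbar : Fin m → ℝ) (hGinv : IsUnit (G σbar).det)
    (hcrit : fderiv ℝ Pd σbar = 0)
    (xbar : Fin n → ℝ) (hxbar : xbar = (G σbar)⁻¹ *ᵥ F σbar)
    -- ∇Λ(x̄) : the n×m matrix whose k-th column is B^k x̄ + b_k
    (L : Matrix (Fin n) (Fin m) ℝ)
    (hL : L = Matrix.of fun i k => ((B k) *ᵥ xbar + b k) i) :
    (Matrix.of fun k l : Fin m =>
        fderiv ℝ (fun σ => fderiv ℝ Pd σ (Pi.single l 1)) σbar (Pi.single k 1)) =
      -(Lᵀ * (G σbar)⁻¹ * L) -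
      (Matrix.of fun k l : Fin m =>
        fderiv ℝ (fun σ => fderiv ℝ Vs σ (Pi.single l 1)) σbar (Pi.single k 1)) :=
  hessian_dual_general A B b f Vs hVs hA hB G hG F hF Pd hPd σbar hGinv xbar hxbar L hL
end

section
/- Eigenvalue-counting lemma (Lemma 1 of the paper, m < n): let G be symmetric negative definite n×n, R invertible m×m, and L ∈ ℝ^{n×m} with -L^T G⁻¹ L - R^T R ≻ 0. Then the symmetric matrix H := G + L (R^T R)⁻¹ L^T has exactly m positive eigenvalues and n - m negative eigenvalues (counted with multiplicity); in particular there exist P♭ ∈ ℝ^{n×m} and P♯ ∈ ℝ^{n×(n-m)} with P♭^T H P♭ ≻ 0 and P♯^T H P♯ ≺ 0. -/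
/-!
With `C = RᵀR` and `T = -(LᵀG⁻¹L) - C ≻ 0`, the test matrix `G⁻¹L` gives
`(G⁻¹L)ᵀ H (G⁻¹L) = T + T C⁻¹ T ≻ 0`, so `H` is positive definite on an `m`-dimensional
subspace; on `ker Lᵀ`, of dimension at least `n - m`, `H` agrees with `G ≺ 0`. Writing the
quadratic form of `H` in an orthonormal eigenbasis, a subspace on which it is positive (negative)
definite embeds injectively into the span of the eigenvectors with positive (negative)
eigenvalues. The two lower bounds `m` and `n - m` add up to `n`, so both are attained.
-/

open Matrix Finset

lemma le_card_filter_pos_of_sum_mul_sq_pos {ι V : Type*} [Fintype ι] [AddCommGroup V]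
    [Module ℝ V] [FiniteDimensional ℝ V] (w : ι → ℝ) (f : V →ₗ[ℝ] ι → ℝ)
    (hf : ∀ x ≠ 0, 0 < ∑ i, w i * f x i ^ 2) :
    Module.finrank ℝ V ≤ #{i | 0 < w i} := by
  let g : V →ₗ[ℝ] {i // 0 < w i} → ℝ := LinearMap.funLeft ℝ ℝ Subtype.val ∘ₗ f
  have hg : Function.Injective g := by
    refine (injective_iff_map_eq_zero g).mpr fun x hx => ?_
    by_contra hx0
    have hvanish : ∀ i, 0 < w i → f x i = 0 := fun i hi => congrFun hx ⟨i, hi⟩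
    have hnonpos : ∑ i, w i * f x i ^ 2 ≤ 0 := by
      refine Finset.sum_nonpos fun i _ => ?_
      by_cases hi : 0 < w i
      · simp [hvanish i hi]
      · exact mul_nonpos_of_nonpos_of_nonneg (not_lt.mp hi) (sq_nonneg _)
    exact (hf x hx0).not_ge hnonpos
  simpa [Fintype.card_subtype] using LinearMap.finrank_le_finrank_of_injective hg

lemma Matrix.dotProduct_transpose_mul_mul_mulVec {R n κ : Type*} [CommSemiring R] [Fintype n]
    [Fintype κ] (N : Matrix n n R) (P : Matrix n κ R) (x : κ → R) :
    x ⬝ᵥ ((Pᵀ * N * P) *ᵥ x) = (P *ᵥ x) ⬝ᵥ (N *ᵥ (P *ᵥ x)) := by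
  rw [← mulVec_mulVec, ← mulVec_mulVec, dotProduct_mulVec, vecMul_transpose]

namespace Matrix.IsHermitian

variable {n : Type*} [Fintype n] [DecidableEq n] {N : Matrix n n ℝ} (hN : N.IsHermitian)

lemma dotProduct_mulVec_eq_sum_eigenvalues_mul_sq (y : n → ℝ) :
    y ⬝ᵥ (N *ᵥ y) = ∑ i, hN.eigenvalues i *
      ((star (hN.eigenvectorUnitary : Matrix n n ℝ) *ᵥ y) i) ^ 2 := by
  set U := (hN.eigenvectorUnitary : Matrix n n ℝ)
  conv_lhs => rw [hN.spectral_theorem, Unitary.conjStarAlgAut_apply]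
  rw [← mulVec_mulVec, ← mulVec_mulVec, dotProduct_mulVec,
    show y ᵥ* U = star U *ᵥ y by
      rw [star_eq_conjTranspose, conjTranspose_eq_transpose_of_trivial, mulVec_transpose]]
  simp only [dotProduct, mulVec_diagonal, Function.comp_apply, RCLike.ofReal_real_eq_id, id_eq]
  exact Finset.sum_congr rfl fun i _ => by ring

lemma card_le_card_filter_eigenvalues_pos {κ : Type*} [Fintype κ] (P : Matrix n κ ℝ)
    (hP : (Pᵀ * N * P).PosDef) : Fintype.card κ ≤ #{i | 0 < hN.eigenvalues i} := by
  have := le_card_filter_pos_of_sum_mul_sq_pos hN.eigenvalues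
    (star (hN.eigenvectorUnitary : Matrix n n ℝ) * P).mulVecLin fun x hx => by
      have hpos := hP.dotProduct_mulVec_pos hx
      rw [star_trivial, dotProduct_transpose_mul_mul_mulVec,
        hN.dotProduct_mulVec_eq_sum_eigenvalues_mul_sq] at hpos
      simpa [mulVec_mulVec] using hpos
  simpa using this

lemma card_le_card_filter_eigenvalues_neg {κ : Type*} [Fintype κ] (P : Matrix n κ ℝ)
    (hP : (-(Pᵀ * N * P)).PosDef) : Fintype.card κ ≤ #{i | hN.eigenvalues i < 0} := by
  have := le_card_filter_pos_of_sum_mul_sq_pos (-hN.eigenvalues)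
    (star (hN.eigenvectorUnitary : Matrix n n ℝ) * P).mulVecLin fun x hx => by
      have hpos := hP.dotProduct_mulVec_pos hx
      rw [star_trivial, neg_mulVec, dotProduct_neg, dotProduct_transpose_mul_mul_mulVec,
        hN.dotProduct_mulVec_eq_sum_eigenvalues_mul_sq, ← Finset.sum_neg_distrib] at hpos
      simpa [mulVec_mulVec] using hpos
  simpa using this

lemma card_filter_eigenvalues_pos_add_card_filter_eigenvalues_neg_le :
    #{i | 0 < hN.eigenvalues i} + #{i | hN.eigenvalues i < 0} ≤ Fintype.card n := by
  rw [← card_union_of_disjoint (disjoint_filter.mpr fun i _ hpos hneg => hpos.not_gt hneg)]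
  exact card_le_univ _

end Matrix.IsHermitian

lemma Matrix.exists_injective_mulVec_mul_eq_zero {K : Type*} [Field K] {m n : ℕ}
    (A : Matrix (Fin m) (Fin n) K) :
    ∃ P : Matrix (Fin n) (Fin (n - m)) K, Function.Injective P.mulVec ∧ A * P = 0 := by
  have hker : n - m ≤ Module.finrank K (LinearMap.ker A.mulVecLin) := by
    have hrange : Module.finrank K (LinearMap.range A.mulVecLin) ≤ m := by
      simpa [Matrix.rank] using A.rank_le_card_height
    have := LinearMap.finrank_range_add_finrank_ker A.mulVecLin
    simp only [Module.finrank_fin_fun] at this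
    omega
  obtain ⟨f, hf⟩ := (finrank_le_iff_exists_linearMap (R := K) (M := Fin (n - m) → K)
    (M' := LinearMap.ker A.mulVecLin)).mp (by rwa [Module.finrank_fin_fun])
  let φ := (LinearMap.ker A.mulVecLin).subtype ∘ₗ f
  have hφ : (LinearMap.toMatrix' φ).mulVec = φ := funext (LinearMap.toMatrix'_mulVec φ)
  refine ⟨LinearMap.toMatrix' φ, hφ ▸ Subtype.val_injective.comp hf, ?_⟩
  refine Matrix.toLin'.injective (LinearMap.ext fun x => ?_)
  rw [toLin'_apply, toLin'_apply, ← mulVec_mulVec, hφ, zero_mulVec]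
  exact LinearMap.mem_ker.mp (f x).2

lemma Matrix.transpose_mul_add_mul_inv_mul_transpose_mul {R n m : Type*} [CommRing R]
    [Fintype n] [DecidableEq n] [Fintype m] [DecidableEq m]
    (G : Matrix n n R) (C : Matrix m m R) (L : Matrix n m R) (hGt : Gᵀ = G) (hG : IsUnit G.det)
    (hC : IsUnit C.det) :
    (G⁻¹ * L)ᵀ * (G + L * C⁻¹ * Lᵀ) * (G⁻¹ * L) =
      (-(Lᵀ * G⁻¹ * L) - C) + (-(Lᵀ * G⁻¹ * L) - C) * C⁻¹ * (-(Lᵀ * G⁻¹ * L) - C) := by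
  rw [transpose_mul, transpose_nonsing_inv, hGt]
  simp only [Matrix.mul_add, Matrix.add_mul, Matrix.sub_mul, Matrix.mul_sub,
    Matrix.neg_mul, Matrix.mul_neg, Matrix.mul_assoc,
    Matrix.mul_nonsing_inv_cancel_left _ _ hG,
    Matrix.nonsing_inv_mul _ hC, Matrix.mul_nonsing_inv _ hC, Matrix.mul_one, Matrix.one_mul]
  abel

lemma Matrix.transpose_mul_add_mul_mul_transpose_mul_of_transpose_mul_eq_zero {R n m κ : Type*}
    [CommRing R] [Fintype n] [Fintype m] (G : Matrix n n R) (X : Matrix m m R)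
    (L : Matrix n m R) (P : Matrix n κ R) (hLP : Lᵀ * P = 0) :
    Pᵀ * (G + L * X * Lᵀ) * P = Pᵀ * G * P := by
  have hPL : Pᵀ * L = 0 := by simpa using congrArg transpose hLP
  simp [Matrix.mul_add, Matrix.mul_assoc, ← Matrix.mul_assoc Pᵀ L, hPL]

theorem eigenvalue_counting_primal_general {n m : ℕ}
    (G : Matrix (Fin n) (Fin n) ℝ) (R : Matrix (Fin m) (Fin m) ℝ)
    (L : Matrix (Fin n) (Fin m) ℝ)
    (hG : (-G).PosDef) (hR : IsUnit R.det)
    (hdual : (-(Lᵀ * G⁻¹ * L) - Rᵀ * R).PosDef) :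
    ∃ hH : (G + L * (Rᵀ * R)⁻¹ * Lᵀ).IsHermitian,
      (Finset.univ.filter fun i => 0 < hH.eigenvalues i).card = m ∧
      (Finset.univ.filter fun i => hH.eigenvalues i < 0).card = n - m ∧
      ∃ (Pflat : Matrix (Fin n) (Fin m) ℝ) (Psharp : Matrix (Fin n) (Fin (n - m)) ℝ),
        (Pflatᵀ * (G + L * (Rᵀ * R)⁻¹ * Lᵀ) * Pflat).PosDef ∧
        (-(Psharpᵀ * (G + L * (Rᵀ * R)⁻¹ * Lᵀ) * Psharp)).PosDef := by
  have hGsymm : Gᵀ = G := by simpa using hG.isHermitian.neg.eq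
  have hGdet : IsUnit G.det := (isUnit_iff_isUnit_det G).mp (by simpa using hG.isUnit.neg)
  have hC : (Rᵀ * R).PosDef := by
    simpa using PosDef.conjTranspose_mul_self R
      (mulVec_injective_iff_isUnit.mpr ((isUnit_iff_isUnit_det R).mpr hR))
  have hH : (G + L * (Rᵀ * R)⁻¹ * Lᵀ).IsHermitian := by
    simpa using hG.isHermitian.neg.add (isHermitian_conjTranspose_mul_mul Lᵀ hC.isHermitian.inv)
  have hflat : ((G⁻¹ * L)ᵀ * (G + L * (Rᵀ * R)⁻¹ * Lᵀ) * (G⁻¹ * L)).PosDef := by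
    rw [transpose_mul_add_mul_inv_mul_transpose_mul G _ L hGsymm hGdet hC.det_pos.ne'.isUnit]
    have hcorr := hC.inv.posSemidef.conjTranspose_mul_mul_same (-(Lᵀ * G⁻¹ * L) - Rᵀ * R)
    rw [hdual.isHermitian.eq] at hcorr
    exact hdual.add_posSemidef hcorr
  obtain ⟨Psharp, hinj, hLP⟩ := exists_injective_mulVec_mul_eq_zero Lᵀ
  have hsharp : (-(Psharpᵀ * (G + L * (Rᵀ * R)⁻¹ * Lᵀ) * Psharp)).PosDef := by
    rw [transpose_mul_add_mul_mul_transpose_mul_of_transpose_mul_eq_zero G _ L Psharp hLP]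
    simpa using hG.conjTranspose_mul_mul_same hinj
  have hpos := hH.card_le_card_filter_eigenvalues_pos _ hflat
  have hneg := hH.card_le_card_filter_eigenvalues_neg _ hsharp
  have htotal := hH.card_filter_eigenvalues_pos_add_card_filter_eigenvalues_neg_le
  simp only [Fintype.card_fin] at hpos hneg htotal
  exact ⟨hH, by omega, by omega, _, Psharp, hflat, hsharp⟩

/-- Eigenvalue-counting lemma (Lemma 1, m < n): under the dual second-order
condition, `H := G + L (RᵀR)⁻¹ Lᵀ` has exactly `m` positive and `n - m` negative
eigenvalues, and admits subspaces of positivity and negativity of those dimensions. -/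
theorem eigenvalue_counting_primal {n m : ℕ} (hmn : m < n)
    (G : Matrix (Fin n) (Fin n) ℝ) (R : Matrix (Fin m) (Fin m) ℝ)
    (L : Matrix (Fin n) (Fin m) ℝ)
    (hG : (-G).PosDef) (hR : IsUnit R.det)
    (hdual : (-(Lᵀ * G⁻¹ * L) - Rᵀ * R).PosDef) :
    ∃ hH : (G + L * (Rᵀ * R)⁻¹ * Lᵀ).IsHermitian,
      (Finset.univ.filter fun i => 0 < hH.eigenvalues i).card = m ∧
      (Finset.univ.filter fun i => hH.eigenvalues i < 0).card = n - m ∧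
      ∃ (Pflat : Matrix (Fin n) (Fin m) ℝ) (Psharp : Matrix (Fin n) (Fin (n - m)) ℝ),
        (Pflatᵀ * (G + L * (Rᵀ * R)⁻¹ * Lᵀ) * Pflat).PosDef ∧
        (-(Psharpᵀ * (G + L * (Rᵀ * R)⁻¹ * Lᵀ) * Psharp)).PosDef :=
  eigenvalue_counting_primal_general G R L hG hR hdual
end

section
/- Dual-side eigenvalue counting (Lemma 2, m > n): let G be symmetric negative definite n×n, C symmetric positive definite m×m, L ∈ ℝ^{n×m}, and suppose H_p := G + L C⁻¹ L^T ≻ 0. Then the symmetric m×m matrix H_d := -L^T G⁻¹ L - C has exactly n positive and m - n negative eigenvalues; in particular there exist Q♭ ∈ ℝ^{m×n} and Q♯ ∈ ℝ^{m×(m-n)} with Q♭^T H_d Q♭ ≻ 0 and Q♯^T H_d Q♯ ≺ 0. -/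
/-!
Test `H_d` on two complementary subspaces. For `Q♭ = C⁻¹ Lᵀ` one computes
`Q♭ᵀ H_d Q♭ = H_p (-G)⁻¹ H_p + H_p ≻ 0`, and for `Q♯` with independent columns in `ker L`
(there are at least `m - n` of them) `Q♯ᵀ H_d Q♯ = -Q♯ᵀ C Q♯ ≺ 0`. A symmetric matrix whose form is
positive definite on a `d`-dimensional subspace has at least `d` positive eigenvalues: otherwise
some nonzero vector of that subspace has no component along the positive eigenvectors. The same
holds for negative eigenvalues, and since `n + (m - n) ≥ m` both bounds are attained.
-/

open Matrix Finset

namespace Matrix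

variable {ι κ : Type*} [Fintype ι] [Fintype κ]

theorem card_le_card_filter_pos_of_sum_mul_sq_pos (w : ι → ℝ) (R : Matrix ι κ ℝ)
    (h : ∀ y ≠ 0, 0 < ∑ i, w i * (R *ᵥ y) i ^ 2) :
    Fintype.card κ ≤ #{i | 0 < w i} := by
  by_contra! hlt
  let P : Finset ι := {i | 0 < w i}
  have hrank : Module.finrank ℝ (P → ℝ) < Module.finrank ℝ (κ → ℝ) := by simpa using hlt
  obtain ⟨y, hy, hy0⟩ := (Submodule.ne_bot_iff _).mp
    (LinearMap.ker_ne_bot_of_finrank_lt (f := (R.submatrix ((↑) : P → ι) id).mulVecLin) hrank)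
  have hRy : ∀ i ∈ P, (R *ᵥ y) i = 0 := fun i hi => congrFun (LinearMap.mem_ker.mp hy) ⟨i, hi⟩
  have hnonpos : ∑ i, w i * (R *ᵥ y) i ^ 2 ≤ 0 := by
    refine sum_nonpos fun i _ => ?_
    by_cases hi : 0 < w i
    · simp [hRy i (by simpa [P] using hi)]
    · exact mul_nonpos_of_nonpos_of_nonneg (not_lt.mp hi) (sq_nonneg _)
  exact (h y hy0).not_ge hnonpos

theorem dotProduct_transpose_mul_mul_mulVec_s17 {R : Type*} [CommSemiring R] (A : Matrix ι ι R)
    (Q : Matrix ι κ R) (y : κ → R) :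
    y ⬝ᵥ ((Qᵀ * A * Q) *ᵥ y) = (Q *ᵥ y) ⬝ᵥ (A *ᵥ (Q *ᵥ y)) := by
  rw [← mulVec_mulVec, ← mulVec_mulVec, dotProduct_mulVec, vecMul_transpose]

theorem exists_mul_eq_zero_and_mulVec_injective {K : Type*} [Field K] (L : Matrix κ ι K) {d : ℕ}
    (hd : d ≤ Fintype.card ι - Fintype.card κ) :
    ∃ Q : Matrix ι (Fin d) K, L * Q = 0 ∧ Function.Injective Q.mulVec := by
  have hker : d ≤ Module.finrank K (LinearMap.ker L.mulVecLin) := by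
    have hsum := L.mulVecLin.finrank_range_add_finrank_ker
    have hrange := Submodule.finrank_le (LinearMap.range L.mulVecLin)
    simp only [Module.finrank_fintype_fun_eq_card] at hsum hrange
    omega
  obtain ⟨v, hv⟩ := exists_linearIndependent_of_le_finrank hker
  refine ⟨(of fun j => (v j : ι → K))ᵀ, ?_, ?_⟩
  · ext i j
    exact congrFun (v j).2 i
  · rw [mulVec_injective_iff]
    exact hv.map' _ (LinearMap.ker _).ker_subtype

namespace IsHermitian

variable [DecidableEq ι] {A : Matrix ι ι ℝ}

theorem dotProduct_mulVec_eq_sum_eigenvalues_mul_sq_s17 (hA : A.IsHermitian) (x : ι → ℝ) :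
    x ⬝ᵥ (A *ᵥ x) =
      ∑ i, hA.eigenvalues i * (star (hA.eigenvectorUnitary : Matrix ι ι ℝ) *ᵥ x) i ^ 2 := by
  set U : Matrix ι ι ℝ := (hA.eigenvectorUnitary : Matrix ι ι ℝ)
  have hspectral : A = U * diagonal hA.eigenvalues * Uᵀ := by
    conv_lhs => rw [hA.spectral_theorem, Unitary.conjStarAlgAut_apply]
    simp [U, star_eq_conjTranspose]
  have hstar : star U = Uᵀ := by simp [star_eq_conjTranspose]
  rw [hstar]
  conv_lhs =>
    rw [hspectral, ← mulVec_mulVec, ← mulVec_mulVec, dotProduct_mulVec, ← mulVec_transpose]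
  simp only [dotProduct, mulVec_diagonal]
  exact sum_congr rfl fun i _ => by ring

theorem card_le_card_filter_eigenvalues_pos_s17 (hA : A.IsHermitian) (Q : Matrix ι κ ℝ)
    (hQ : (Qᵀ * A * Q).PosDef) :
    Fintype.card κ ≤ #{i | 0 < hA.eigenvalues i} := by
  refine card_le_card_filter_pos_of_sum_mul_sq_pos _
    (star (hA.eigenvectorUnitary : Matrix ι ι ℝ) * Q) fun y hy => ?_
  have hpos := hQ.dotProduct_mulVec_pos hy
  rwa [star_trivial, dotProduct_transpose_mul_mul_mulVec_s17,
    hA.dotProduct_mulVec_eq_sum_eigenvalues_mul_sq_s17, mulVec_mulVec] at hpos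

theorem card_le_card_filter_eigenvalues_neg_s17 (hA : A.IsHermitian) (Q : Matrix ι κ ℝ)
    (hQ : (-(Qᵀ * A * Q)).PosDef) :
    Fintype.card κ ≤ #{i | hA.eigenvalues i < 0} := by
  simp_rw [← neg_pos (a := hA.eigenvalues _)]
  refine card_le_card_filter_pos_of_sum_mul_sq_pos _
    (star (hA.eigenvectorUnitary : Matrix ι ι ℝ) * Q) fun y hy => ?_
  have hpos := hQ.dotProduct_mulVec_pos hy
  rw [star_trivial, neg_mulVec, dotProduct_neg, dotProduct_transpose_mul_mul_mulVec_s17,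
    hA.dotProduct_mulVec_eq_sum_eigenvalues_mul_sq_s17, mulVec_mulVec, ← sum_neg_distrib] at hpos
  simpa only [neg_mul] using hpos

theorem card_filter_eigenvalues_pos_and_neg_eq {κ' : Type*} [Fintype κ'] (hA : A.IsHermitian)
    (Q : Matrix ι κ ℝ) (Q' : Matrix ι κ' ℝ) (hQ : (Qᵀ * A * Q).PosDef)
    (hQ' : (-(Q'ᵀ * A * Q')).PosDef)
    (hcard : Fintype.card ι ≤ Fintype.card κ + Fintype.card κ') :
    #{i | 0 < hA.eigenvalues i} = Fintype.card κ ∧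
      #{i | hA.eigenvalues i < 0} = Fintype.card κ' := by
  have hpos := hA.card_le_card_filter_eigenvalues_pos_s17 Q hQ
  have hneg := hA.card_le_card_filter_eigenvalues_neg_s17 Q' hQ'
  have hneg_le : #{i | hA.eigenvalues i < 0} ≤ #{i | ¬ 0 < hA.eigenvalues i} :=
    card_le_card fun i => by simpa only [mem_filter, mem_univ, true_and] using LT.lt.not_gt
  have htotal := card_filter_add_card_filter_not (s := univ) fun i => 0 < hA.eigenvalues i
  rw [card_univ] at htotal
  omega

end IsHermitian

-- In the paper's notation `H_d = -(Lᵀ * G⁻¹ * L) - C` and `H_p = G + L * C⁻¹ * Lᵀ`.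
variable {m n : Type*} [Fintype n] [DecidableEq n]

theorem isUnit_det_of_posDef_neg {G : Matrix n n ℝ} (hG : (-G).PosDef) : IsUnit G.det := by
  simpa using (isUnit_iff_isUnit_det _).mp hG.isUnit.neg

theorem PosDef.neg_mul_inv_mul_add {G H : Matrix n n ℝ} (hG : (-G).PosDef) (hH : H.PosDef) :
    (-(H * G⁻¹ * H) + H).PosDef := by
  have hinv : (-G)⁻¹ = -G⁻¹ :=
    inv_eq_left_inv (by rw [neg_mul_neg, nonsing_inv_mul _ (isUnit_det_of_posDef_neg hG)])
  have hpsd := hG.inv.posSemidef.conjTranspose_mul_mul_same H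
  rw [hH.1.eq, hinv, Matrix.mul_neg, Matrix.neg_mul] at hpsd
  exact PosDef.posSemidef_add hpsd hH

theorem transpose_mul_dual_mul_eq [Fintype m] [DecidableEq m] {R : Type*} [CommRing R]
    {G : Matrix n n R} {C : Matrix m m R} (L : Matrix n m R) (hG : IsUnit G.det)
    (hC : IsUnit C.det) (hCsymm : C.IsSymm) :
    (C⁻¹ * Lᵀ)ᵀ * (-(Lᵀ * G⁻¹ * L) - C) * (C⁻¹ * Lᵀ) =
      -((G + L * C⁻¹ * Lᵀ) * G⁻¹ * (G + L * C⁻¹ * Lᵀ)) + (G + L * C⁻¹ * Lᵀ) := by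
  rw [transpose_mul, transpose_transpose, transpose_nonsing_inv, hCsymm.eq]
  simp only [Matrix.mul_add, Matrix.add_mul, Matrix.mul_sub, Matrix.sub_mul, Matrix.mul_neg,
    Matrix.neg_mul, Matrix.mul_assoc, nonsing_inv_mul_cancel_left (h := hC),
    mul_nonsing_inv _ hG, nonsing_inv_mul _ hG, Matrix.mul_one, Matrix.one_mul]
  abel

theorem posDef_transpose_mul_dual_mul [Fintype m] [DecidableEq m] {G : Matrix n n ℝ}
    {C : Matrix m m ℝ} {L : Matrix n m ℝ} (hG : (-G).PosDef) (hC : C.PosDef)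
    (hHp : (G + L * C⁻¹ * Lᵀ).PosDef) :
    ((C⁻¹ * Lᵀ)ᵀ * (-(Lᵀ * G⁻¹ * L) - C) * (C⁻¹ * Lᵀ)).PosDef := by
  rw [transpose_mul_dual_mul_eq L (isUnit_det_of_posDef_neg hG)
    ((isUnit_iff_isUnit_det _).mp hC.isUnit) (isHermitian_iff_isSymm.mp hC.1)]
  exact PosDef.neg_mul_inv_mul_add hG hHp

theorem posDef_neg_transpose_mul_dual_mul [Fintype m] {k : Type*} [Fintype k]
    (G : Matrix n n ℝ) {C : Matrix m m ℝ} {L : Matrix n m ℝ} (hC : C.PosDef) {Q : Matrix m k ℝ}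
    (hLQ : L * Q = 0) (hQ : Function.Injective Q.mulVec) :
    (-(Qᵀ * (-(Lᵀ * G⁻¹ * L) - C) * Q)).PosDef := by
  have hdual : -(Qᵀ * (-(Lᵀ * G⁻¹ * L) - C) * Q) = Qᴴ * C * Q := by
    simp only [Matrix.sub_mul, Matrix.mul_sub, Matrix.neg_mul, Matrix.mul_neg, Matrix.mul_assoc,
      hLQ, Matrix.mul_zero, neg_zero, zero_sub, neg_neg, conjTranspose_eq_transpose_of_trivial]
  rw [hdual]
  exact hC.conjTranspose_mul_mul_same hQ

theorem isHermitian_neg_transpose_mul_inv_mul_sub {G : Matrix n n ℝ} {C : Matrix m m ℝ}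
    (L : Matrix n m ℝ) (hG : G.IsHermitian) (hC : C.IsHermitian) :
    (-(Lᵀ * G⁻¹ * L) - C).IsHermitian := by
  rw [← conjTranspose_eq_transpose_of_trivial]
  exact (isHermitian_conjTranspose_mul_mul L hG.inv).neg.sub hC

end Matrix

theorem eigenvalue_counting_dual_general {n m : ℕ}
    (G : Matrix (Fin n) (Fin n) ℝ) (C : Matrix (Fin m) (Fin m) ℝ)
    (L : Matrix (Fin n) (Fin m) ℝ)
    (hG : (-G).PosDef) (hC : C.PosDef)
    (hHp : (G + L * C⁻¹ * Lᵀ).PosDef) :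
    ∃ hH : (-(Lᵀ * G⁻¹ * L) - C).IsHermitian,
      (Finset.univ.filter fun i => 0 < hH.eigenvalues i).card = n ∧
      (Finset.univ.filter fun i => hH.eigenvalues i < 0).card = m - n ∧
      ∃ (Qflat : Matrix (Fin m) (Fin n) ℝ) (Qsharp : Matrix (Fin m) (Fin (m - n)) ℝ),
        (Qflatᵀ * (-(Lᵀ * G⁻¹ * L) - C) * Qflat).PosDef ∧
        (-(Qsharpᵀ * (-(Lᵀ * G⁻¹ * L) - C) * Qsharp)).PosDef := by
  have hH := isHermitian_neg_transpose_mul_inv_mul_sub L (by simpa using hG.1.neg) hC.1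
  have hflat := posDef_transpose_mul_dual_mul hG hC hHp
  obtain ⟨Qsharp, hLQ, hQinj⟩ := exists_mul_eq_zero_and_mulVec_injective L (d := m - n) (by simp)
  have hsharp := posDef_neg_transpose_mul_dual_mul G hC hLQ hQinj
  obtain ⟨hpos, hneg⟩ := hH.card_filter_eigenvalues_pos_and_neg_eq _ _ hflat hsharp
    (by simp only [Fintype.card_fin]; omega)
  exact ⟨hH, by simpa using hpos, by simpa using hneg, _, Qsharp, hflat, hsharp⟩

/-- Dual-side eigenvalue counting (Lemma 2, m > n): if `H_p := G + L C⁻¹ Lᵀ ≻ 0`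
with `G ≺ 0`, `C ≻ 0`, then `H_d := -Lᵀ G⁻¹ L - C` has exactly `n` positive and
`m - n` negative eigenvalues. -/
theorem eigenvalue_counting_dual {n m : ℕ} (hmn : n < m)
    (G : Matrix (Fin n) (Fin n) ℝ) (C : Matrix (Fin m) (Fin m) ℝ)
    (L : Matrix (Fin n) (Fin m) ℝ)
    (hG : (-G).PosDef) (hC : C.PosDef)
    (hHp : (G + L * C⁻¹ * Lᵀ).PosDef) :
    ∃ hH : (-(Lᵀ * G⁻¹ * L) - C).IsHermitian,
      (Finset.univ.filter fun i => 0 < hH.eigenvalues i).card = n ∧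
      (Finset.univ.filter fun i => hH.eigenvalues i < 0).card = m - n ∧
      ∃ (Qflat : Matrix (Fin m) (Fin n) ℝ) (Qsharp : Matrix (Fin m) (Fin (m - n)) ℝ),
        (Qflatᵀ * (-(Lᵀ * G⁻¹ * L) - C) * Qflat).PosDef ∧
        (-(Qsharpᵀ * (-(Lᵀ * G⁻¹ * L) - C) * Qsharp)).PosDef :=
  eigenvalue_counting_dual_general G C L hG hC hHp
end

section
/- For the quadratic-log example with n = 1, m = 1: let Π(x) = ½ a x² - log(½ b x² + d) - f x with a > 0, b > 0, d > 0. Then for any critical point ς̄ ∈ [-1/d, 0) of Π^d(ς) = -½ f²/(a + ς b) + dς + 1 + log(-ς) with a + ς̄ b > 0, the point x̄ = f/(a + ς̄ b) is a global minimizer of Π on ℝ. -/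
/-!
At a critical point `ς̄ < 0` of the dual, the stationarity equation says exactly
`ς̄ · (½ b x̄² + d) = -1` for `x̄ = f / (a + ς̄ b)`, i.e. `-ς̄` is the derivative of `log` at
`ȳ = ½ b x̄² + d`. Concavity of `log` (its tangent line at `ȳ` lies above it) then gives
`Π(x) - Π(x̄) ≥ ½ (a + ς̄ b) (x - x̄)²`, which is nonnegative when `a + ς̄ b > 0`.
-/

open Real

namespace QuadraticLog

variable (a b d f : ℝ)

noncomputable def primal (x : ℝ) : ℝ :=
  (1/2) * a * x^2 - log ((1/2) * b * x^2 + d) - f * x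

noncomputable def dual (ς : ℝ) : ℝ :=
  -(1/2) * (f^2 / (a + ς * b)) + d * ς + 1 + log (-ς)

variable {a b d f}

theorem hasDerivAt_dual {ς : ℝ} (hς : ς ≠ 0) (hG : a + ς * b ≠ 0) :
    HasDerivAt (dual a b d f) ((1/2) * f^2 * b / (a + ς * b)^2 + d + 1 / ς) ς := by
  have hG' : HasDerivAt (fun ς : ℝ => a + ς * b) b ς := by
    simpa using ((hasDerivAt_id ς).mul_const b).const_add a
  have hlog : HasDerivAt (fun ς : ℝ => log (-ς)) (-1 / -ς) ς :=
    (hasDerivAt_id ς).neg.log (neg_ne_zero.mpr hς)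
  refine (((((hasDerivAt_const ς (f^2)).div hG' hG).const_mul (-(1/2))).add
    ((hasDerivAt_id ς).const_mul d)).add_const 1 |>.add hlog).congr_deriv ?_
  field_simp
  ring

theorem mul_eq_neg_one_of_deriv_dual_eq_zero {ς : ℝ} (hς : ς ≠ 0) (hG : a + ς * b ≠ 0)
    (hcrit : deriv (dual a b d f) ς = 0) :
    ς * ((1/2) * b * (f / (a + ς * b))^2 + d) = -1 := by
  have h := (hasDerivAt_dual (d := d) (f := f) hς hG).deriv
  rw [hcrit] at h
  field_simp at h ⊢
  linear_combination -h

theorem log_le_log_add_inv_mul_sub {y z : ℝ} (hy : 0 < y) (hz : 0 < z) :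
    log y ≤ log z + z⁻¹ * (y - z) := by
  have h := log_le_sub_one_of_pos (div_pos hy hz)
  rw [log_div hy.ne' hz.ne'] at h
  have hslope : y / z - 1 = z⁻¹ * (y - z) := by field_simp
  linarith

theorem sq_le_primal_sub_primal (hb : 0 ≤ b) (hd : 0 < d) {ς x₀ : ℝ}
    (hcrit : ς * ((1/2) * b * x₀^2 + d) = -1) (hx₀ : (a + ς * b) * x₀ = f) (x : ℝ) :
    (1/2) * (a + ς * b) * (x - x₀)^2 ≤ primal a b d f x - primal a b d f x₀ := by
  have hy : 0 < (1/2) * b * x^2 + d := by positivity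
  have hy₀ : 0 < (1/2) * b * x₀^2 + d := by positivity
  have htangent := log_le_log_add_inv_mul_sub hy hy₀
  have hinv : ((1/2) * b * x₀^2 + d)⁻¹ = -ς :=
    inv_eq_of_mul_eq_one_left (by linear_combination -hcrit)
  rw [hinv] at htangent
  unfold primal
  linear_combination htangent - (x - x₀) * hx₀

end QuadraticLog

open QuadraticLog in
theorem quadratic_log_example_general
    (a b d f : ℝ) (hb : 0 < b) (hd : 0 < d)
    (Pr : ℝ → ℝ)
    (hPr : Pr = fun x => (1/2) * a * x^2 - Real.log ((1/2) * b * x^2 + d) - f * x)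
    (Pd : ℝ → ℝ)
    (hPd : Pd = fun ς => -(1/2) * (f^2 / (a + ς * b)) + d * ς + 1 + Real.log (-ς))
    (ςbar : ℝ) (hmem : ςbar ∈ Set.Ico (-(1/d)) (0:ℝ))
    (hcrit : deriv Pd ςbar = 0)
    (hpos : 0 < a + ςbar * b) :
    ∀ x : ℝ, Pr (f / (a + ςbar * b)) ≤ Pr x := by
  obtain rfl : Pr = primal a b d f := hPr
  obtain rfl : Pd = dual a b d f := hPd
  have hstat := mul_eq_neg_one_of_deriv_dual_eq_zero hmem.2.ne hpos.ne' hcrit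
  intro x
  have hgap := sq_le_primal_sub_primal hb.le hd hstat (mul_div_cancel₀ f hpos.ne') x
  linarith [mul_nonneg hpos.le (sq_nonneg (x - f / (a + ςbar * b)))]

/-- Quadratic-log example (n = m = 1): a critical point `ς̄` of the canonical dual
`Π^d` lying in `S_a^+` (i.e. `a + ς̄ b > 0`) yields the global minimizer
`x̄ = f/(a + ς̄ b)` of `Π`. -/
theorem quadratic_log_example
    (a b d f : ℝ) (ha : 0 < a) (hb : 0 < b) (hd : 0 < d)
    (Pr : ℝ → ℝ)
    (hPr : Pr = fun x => (1/2) * a * x^2 - Real.log ((1/2) * b * x^2 + d) - f * x)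
    (Pd : ℝ → ℝ)
    (hPd : Pd = fun ς => -(1/2) * (f^2 / (a + ς * b)) + d * ς + 1 + Real.log (-ς))
    (ςbar : ℝ) (hmem : ςbar ∈ Set.Ico (-(1/d)) (0:ℝ))
    (hcrit : deriv Pd ςbar = 0)
    (hpos : 0 < a + ςbar * b) :
    ∀ x : ℝ, Pr (f / (a + ςbar * b)) ≤ Pr x :=
  quadratic_log_example_general a b d f hb hd Pr hPr Pd hPd ςbar hmem hcrit hpos
end
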